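/- arXiv:1304.5708 — 8 statements merged into one kernel-verified Lean document; each statement's English description precedes it below -/
import Mathlib

section
/- Suppose E : ℤ² × {0,1} → ℝ satisfies the pentagram square relation. Then for any p, q ∈ ℤ² and any two monotone lattice paths from p to q, the product of the labels E over the edges of the first path equals the product of the labels E over the edges of the second path. (Zigzag Lemma: any two rightward zigzags with the same endpoints carry equal monomials.) -/
/-!
Zigzag Lemma: a labeling `E` of the diagonal edges of the pentagram tiling is a
function `E : ℤ² × {0,1} → ℝ`, where `E p 0` labels the edge from `p` to `p+(1,0)`
and `E p 1` labels the edge from `p` to `p+(0,1)`.  If `E` satisfies the pentagram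
square relation, then the products of the labels along any two monotone lattice
paths with the same endpoints agree.
-/

/-- The step in the lattice `ℤ²` corresponding to an edge direction. -/
def gstep : Fin 2 → ℤ × ℤ := fun ε => if ε = 0 then (1, 0) else (0, 1)

/-- The pentagram square relation for an edge labeling `E`. -/
def PentagramRel (E : ℤ × ℤ → Fin 2 → ℝ) : Prop :=
  ∀ p : ℤ × ℤ, E p 0 * E (p + (1, 0)) 1 = E p 1 * E (p + (0, 1)) 0

/-- The endpoint of the monotone lattice path starting at `p` with steps `l`. -/
def pathEnd : ℤ × ℤ → List (Fin 2) → ℤ × ℤ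
  | p, [] => p
  | p, ε :: l => pathEnd (p + gstep ε) l

/-- The product of the labels `E` over the edges of the monotone lattice path
starting at `p` with steps `l`. -/
def pathProd (E : ℤ × ℤ → Fin 2 → ℝ) : ℤ × ℤ → List (Fin 2) → ℝ
  | _, [] => 1
  | p, ε :: l => E p ε * pathProd E (p + gstep ε) l

lemma pathEnd_eq (p : ℤ × ℤ) (l : List (Fin 2)) :
    pathEnd p l = (p.1 + l.count 0, p.2 + l.count 1) := by
  induction l generalizing p with
  | nil => simp [pathEnd]
  | cons a l ih =>
    fin_cases a <;>
      simp [pathEnd, ih, gstep, Prod.ext_iff, List.count_cons] <;> ring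

lemma pathProd_perm (E : ℤ × ℤ → Fin 2 → ℝ) (hE : PentagramRel E)
    {l₁ l₂ : List (Fin 2)} (h : l₁.Perm l₂) (p : ℤ × ℤ) :
    pathProd E p l₁ = pathProd E p l₂ := by
  induction h generalizing p with
  | nil => rfl
  | cons a _ ih => simp [pathProd, ih]
  | swap a b l =>
    have key : E p b * E (p + gstep b) a = E p a * E (p + gstep a) b ∧
        p + gstep b + gstep a = p + gstep a + gstep b := by
      constructor
      · fin_cases a <;> fin_cases b
        · rfl
        · simpa [gstep] using (hE p).symm
        · simpa [gstep] using hE p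
        · rfl
      · abel
    simp only [pathProd]
    rw [← mul_assoc, ← mul_assoc, key.1, key.2]
  | trans _ _ ih₁ ih₂ => exact (ih₁ p).trans (ih₂ p)

/-- **Zigzag Lemma.** If `E` satisfies the pentagram square relation, then any two
monotone lattice paths from `p` to `q` carry equal monomials. -/
theorem zigzag_lemma (E : ℤ × ℤ → Fin 2 → ℝ) (hE : PentagramRel E)
    (p q : ℤ × ℤ) (l₁ l₂ : List (Fin 2))
    (h₁ : pathEnd p l₁ = q) (h₂ : pathEnd p l₂ = q) :
    pathProd E p l₁ = pathProd E p l₂ := by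
  have h := h₁.trans h₂.symm
  rw [pathEnd_eq, pathEnd_eq, Prod.ext_iff] at h
  have hperm : l₁.Perm l₂ := by
    rw [List.perm_iff_count]
    intro a
    have ha : a = 0 ∨ a = 1 := by fin_cases a <;> simp
    rcases ha with ha | ha <;> subst ha
    · have := h.1; omega
    · have := h.2; omega
  exact pathProd_perm E hE hperm p
end

section
/- Let v₀, v₁, v₂, v₃, v₄ ∈ ℝ² be in strictly convex position in this cyclic order. Assume lines (v₂v₃) and (v₃v₄) are not parallel to line (v₀v₁), and lines (v₂v₁) and (v₁v₀) are not parallel to line (v₄v₃). Define the two flag invariants x₃ = [v₀, v₁, (v₀v₁)∩(v₂v₃), (v₀v₁)∩(v₃v₄)] and x₄ = [v₄, v₃, (v₄v₃)∩(v₂v₁), (v₄v₃)∩(v₁v₀)]. Let ℓ be any line in ℝ² not passing through v₂ and not parallel to any of the four lines (v₂v₀), (v₂v₁), (v₂v₃), (v₂v₄), and let p_i = ℓ ∩ (v₂v_i) for i = 0,1,3,4. Then the vertex invariant χ(v₂) = [p₀, p₁, p₃, p₄] satisfies χ(v₂) = x₃ · x₄; i.e., the vertex invariant is the product of the invariants of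 the two adjacent flags. -/
/-!
The cross ratio of four concurrent lines through `o` with directions `qᵢ - o` is the ratio
`det(q₀-o, q₁-o) det(q₂-o, q₃-o) / (det(q₀-o, q₂-o) det(q₁-o, q₃-o))`: on any transversal the
parameter of the `i`-th intersection is a ratio of determinants, and by the Plücker identity
the difference of two such parameters is `det(qᵢ-o, qⱼ-o)` times factors that cancel in the
cross ratio. Each flag invariant is such a pencil cross ratio seen from the vertex of the flag
opposite to its line (`v₃` for `x₃`, `v₁` for `x₄`), and in the product of these two ratios
the determinants of the triangles `v₀v₁v₃` and `v₁v₃v₄` cancel, leaving the ratio at `v₂`.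
-/

/-- Planar determinant (cross product) of two vectors of `ℝ²`. -/
def det2 (u v : ℝ × ℝ) : ℝ := u.1 * v.2 - u.2 * v.1

/-- Counterclockwise orientation of an ordered triple of points of `ℝ²`. -/
def ccw (a b c : ℝ × ℝ) : Prop := 0 < det2 (b - a) (c - a)

/-- Points `w 0, …, w (N-1)` are in strictly convex position in this
(counterclockwise) cyclic order: every ordered triple is counterclockwise. -/
def StrictlyConvexCCW {N : ℕ} (w : Fin N → ℝ × ℝ) : Prop :=
  ∀ i j k : Fin N, i < j → j < k → ccw (w i) (w j) (w k)

/-- The point `p` lies on the line through `a` and `b`. -/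
def onLine (a b p : ℝ × ℝ) : Prop := det2 (b - a) (p - a) = 0

/-- The inverse cross ratio of four real numbers. -/
noncomputable def invCR (a b c d : ℝ) : ℝ := ((a - b) * (c - d)) / ((a - c) * (b - d))

lemma det2_anticomm (u v : ℝ × ℝ) : -det2 u v = det2 v u := by
  unfold det2; ring

lemma det2_self (u : ℝ × ℝ) : det2 u u = 0 := by
  unfold det2; ring

lemma det2_sub_sub_swap (a b c : ℝ × ℝ) : det2 (b - c) (a - c) = -det2 (b - a) (c - a) := by
  simp only [det2, Prod.fst_sub, Prod.snd_sub]; ring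

lemma det2_plucker (x y u p : ℝ × ℝ) :
    det2 x p * det2 u y - det2 u x * det2 y p = det2 x y * det2 u p := by
  unfold det2; ring

lemma onLine_comm {a b p : ℝ × ℝ} : onLine a b p ↔ onLine b a p := by
  have h : det2 (a - b) (p - b) = -det2 (b - a) (p - a) := by
    simp only [det2, Prod.fst_sub, Prod.snd_sub]; ring
  simp only [onLine, h, neg_eq_zero]

lemma exists_smul_eq_of_det2_eq_zero {u x : ℝ × ℝ} (hu : u ≠ 0) (h : det2 u x = 0) :
    ∃ r : ℝ, r • u = x := by
  obtain ⟨u₁, u₂⟩ := u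
  obtain ⟨x₁, x₂⟩ := x
  have hn : u₁ ^ 2 + u₂ ^ 2 ≠ 0 := fun h0 => hu <| by
    obtain ⟨rfl, rfl⟩ : u₁ = 0 ∧ u₂ = 0 := ⟨by nlinarith, by nlinarith⟩
    rfl
  -- the orthogonal projection of `x` on the line `ℝ u`
  refine ⟨(u₁ * x₁ + u₂ * x₂) / (u₁ ^ 2 + u₂ ^ 2), ?_⟩
  simp only [det2] at h
  simp only [Prod.smul_mk, smul_eq_mul, Prod.mk.injEq]
  constructor <;> field_simp
  · linear_combination u₂ * h
  · linear_combination -u₁ * h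

lemma det2_sub_ne_zero_of_forall_add_smul_ne {w u p : ℝ × ℝ} (hu : u ≠ 0)
    (h : ∀ r : ℝ, w + r • u ≠ p) : det2 u (w - p) ≠ 0 := by
  intro h0
  obtain ⟨r, hr⟩ := exists_smul_eq_of_det2_eq_zero hu h0
  exact h (-r) (by rw [neg_smul, hr]; abel)

/-- The cross ratio of the four lines `(o qᵢ)` through `o`. -/
noncomputable def pencilCR (o q₀ q₁ q₂ q₃ : ℝ × ℝ) : ℝ :=
  det2 (q₀ - o) (q₁ - o) * det2 (q₂ - o) (q₃ - o) /
    (det2 (q₀ - o) (q₂ - o) * det2 (q₁ - o) (q₃ - o))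

section Transversal

variable {o w u : ℝ × ℝ}

lemma eq_div_of_onLine {q : ℝ × ℝ} {r : ℝ} (hq : det2 u (q - o) ≠ 0)
    (h : onLine o q (w + r • u)) : r = det2 (q - o) (w - o) / det2 u (q - o) := by
  rw [eq_div_iff hq]
  simp only [onLine, det2, Prod.fst_add, Prod.snd_add, Prod.fst_sub, Prod.snd_sub,
    Prod.smul_fst, Prod.smul_snd, smul_eq_mul] at h ⊢
  linear_combination -h

lemma sub_eq_of_onLine {q q' : ℝ × ℝ} {r r' : ℝ} (hq : det2 u (q - o) ≠ 0)
    (hq' : det2 u (q' - o) ≠ 0) (h : onLine o q (w + r • u)) (h' : onLine o q' (w + r' • u)) :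
    r - r' = det2 (q - o) (q' - o) * det2 u (w - o) / (det2 u (q - o) * det2 u (q' - o)) := by
  rw [eq_div_of_onLine hq h, eq_div_of_onLine hq' h', div_sub_div _ _ hq hq', det2_plucker]

theorem invCR_eq_pencilCR {q₀ q₁ q₂ q₃ : ℝ × ℝ} {r₀ r₁ r₂ r₃ : ℝ}
    (hw : det2 u (w - o) ≠ 0)
    (hq₀ : det2 u (q₀ - o) ≠ 0) (hq₁ : det2 u (q₁ - o) ≠ 0)
    (hq₂ : det2 u (q₂ - o) ≠ 0) (hq₃ : det2 u (q₃ - o) ≠ 0)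
    (hr₀ : onLine o q₀ (w + r₀ • u)) (hr₁ : onLine o q₁ (w + r₁ • u))
    (hr₂ : onLine o q₂ (w + r₂ • u)) (hr₃ : onLine o q₃ (w + r₃ • u)) :
    invCR r₀ r₁ r₂ r₃ = pencilCR o q₀ q₁ q₂ q₃ := by
  rw [invCR, pencilCR, sub_eq_of_onLine hq₀ hq₁ hr₀ hr₁, sub_eq_of_onLine hq₂ hq₃ hr₂ hr₃,
    sub_eq_of_onLine hq₀ hq₂ hr₀ hr₂, sub_eq_of_onLine hq₁ hq₃ hr₁ hr₃]
  field_simp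

end Transversal

theorem invCR_flag_eq_pencilCR {a b c d e : ℝ × ℝ} {s t : ℝ}
    (hd : det2 (b - a) (d - a) ≠ 0) (hcd : det2 (d - c) (b - a) ≠ 0)
    (hde : det2 (e - d) (b - a) ≠ 0)
    (hs : onLine c d (a + s • (b - a))) (ht : onLine d e (a + t • (b - a))) :
    invCR 0 1 s t = pencilCR d a b c e := by
  have hda : det2 (b - a) (a - d) = -det2 (b - a) (d - a) := by
    simp only [det2, Prod.fst_sub, Prod.snd_sub]; ring
  have hdb : det2 (b - a) (b - d) = -det2 (b - a) (d - a) := by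
    simp only [det2, Prod.fst_sub, Prod.snd_sub]; ring
  have hdc : det2 (b - a) (c - d) = det2 (d - c) (b - a) := by
    simp only [det2, Prod.fst_sub, Prod.snd_sub]; ring
  refine invCR_eq_pencilCR (w := a) (u := b - a) ?_ ?_ ?_ ?_ ?_ ?_ ?_ (onLine_comm.mp hs) ht
  · rw [hda]; exact neg_ne_zero.mpr hd
  · rw [hda]; exact neg_ne_zero.mpr hd
  · rw [hdb]; exact neg_ne_zero.mpr hd
  · rwa [hdc]
  · rw [← det2_anticomm]; exact neg_ne_zero.mpr hde
  · rw [zero_smul, add_zero]; exact det2_self _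
  · rw [one_smul, add_sub_cancel]; exact det2_self _

theorem pencilCR_eq_mul_pencilCR {a b c d e : ℝ × ℝ}
    (h₁ : det2 (b - a) (d - a) ≠ 0) (h₂ : det2 (d - e) (b - e) ≠ 0) :
    pencilCR c a b d e = pencilCR d a b c e * pencilCR b e d c a := by
  have hnum :
      det2 (a - d) (b - d) * det2 (c - d) (e - d) * (det2 (e - b) (d - b) * det2 (c - b) (a - b)) =
        -(det2 (b - a) (d - a) * det2 (d - e) (b - e)) *
          (det2 (a - c) (b - c) * det2 (d - c) (e - c)) := by
    simp only [det2, Prod.fst_sub, Prod.snd_sub]; ring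
  have hden :
      det2 (a - d) (c - d) * det2 (b - d) (e - d) * (det2 (e - b) (c - b) * det2 (d - b) (a - b)) =
        -(det2 (b - a) (d - a) * det2 (d - e) (b - e)) *
          (det2 (a - c) (d - c) * det2 (b - c) (e - c)) := by
    simp only [det2, Prod.fst_sub, Prod.snd_sub]; ring
  rw [pencilCR, pencilCR, pencilCR, div_mul_div_comm, hnum, hden,
    mul_div_mul_left _ _ (neg_ne_zero.mpr (mul_ne_zero h₁ h₂))]

theorem vertex_invariant_eq_product_of_flags_general (v : Fin 5 → ℝ × ℝ)
    (hconv : StrictlyConvexCCW v)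
    (h23 : det2 (v 3 - v 2) (v 1 - v 0) ≠ 0)
    (h34 : det2 (v 4 - v 3) (v 1 - v 0) ≠ 0)
    (h21 : det2 (v 1 - v 2) (v 3 - v 4) ≠ 0)
    (h10 : det2 (v 0 - v 1) (v 3 - v 4) ≠ 0)
    (w u : ℝ × ℝ)
    (hv2 : ∀ r : ℝ, w + r • u ≠ v 2)
    (hpar : ∀ i : Fin 5, i ≠ 2 → det2 u (v i - v 2) ≠ 0)
    (s t s' t' r₀ r₁ r₃ r₄ : ℝ)
    (hs : onLine (v 2) (v 3) (v 0 + s • (v 1 - v 0)))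
    (ht : onLine (v 3) (v 4) (v 0 + t • (v 1 - v 0)))
    (hs' : onLine (v 2) (v 1) (v 4 + s' • (v 3 - v 4)))
    (ht' : onLine (v 1) (v 0) (v 4 + t' • (v 3 - v 4)))
    (hr₀ : onLine (v 2) (v 0) (w + r₀ • u))
    (hr₁ : onLine (v 2) (v 1) (w + r₁ • u))
    (hr₃ : onLine (v 2) (v 3) (w + r₃ • u))
    (hr₄ : onLine (v 2) (v 4) (w + r₄ • u)) :
    invCR r₀ r₁ r₃ r₄ = invCR 0 1 s t * invCR 0 1 s' t' := by
  have hu : u ≠ 0 := by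
    rintro rfl
    exact hpar 0 (by decide) (by simp [det2])
  have h013 : det2 (v 1 - v 0) (v 3 - v 0) ≠ 0 := (hconv 0 1 3 (by decide) (by decide)).ne'
  have h431 : det2 (v 3 - v 4) (v 1 - v 4) ≠ 0 := by
    rw [det2_sub_sub_swap]
    exact neg_ne_zero.mpr (hconv 1 3 4 (by decide) (by decide)).ne'
  rw [invCR_eq_pencilCR (det2_sub_ne_zero_of_forall_add_smul_ne hu hv2) (hpar 0 (by decide))
      (hpar 1 (by decide)) (hpar 3 (by decide)) (hpar 4 (by decide)) hr₀ hr₁ hr₃ hr₄,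
    invCR_flag_eq_pencilCR h013 h23 h34 hs ht, invCR_flag_eq_pencilCR h431 h21 h10 hs' ht']
  exact pencilCR_eq_mul_pencilCR h013 h431

/-- Let `v₀,…,v₄` be in strictly convex position in this cyclic order, satisfying the
stated nonparallelism conditions.  Let
`x₃ = [v₀, v₁, (v₀v₁)∩(v₂v₃), (v₀v₁)∩(v₃v₄)]` (computed via the parametrization
`r ↦ v₀ + r•(v₁-v₀)`, in which the two intersection points have parameters `s`, `t`),
and `x₄ = [v₄, v₃, (v₄v₃)∩(v₂v₁), (v₄v₃)∩(v₁v₀)]` (parametrization `r ↦ v₄ + r•(v₃-v₄)`,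
intersection parameters `s'`, `t'`).  Let `ℓ = {w + r•u}` be a line not through `v₂`
and not parallel to any of the lines `(v₂v₀), (v₂v₁), (v₂v₃), (v₂v₄)`, and let
`p_i = ℓ ∩ (v₂v_i)` have parameter `r_i` on `ℓ`.  Then the vertex invariant
`χ(v₂) = [p₀, p₁, p₃, p₄]` equals `x₃ · x₄`. -/
theorem vertex_invariant_eq_product_of_flags (v : Fin 5 → ℝ × ℝ)
    (hconv : StrictlyConvexCCW v)
    (h23 : det2 (v 3 - v 2) (v 1 - v 0) ≠ 0)
    (h34 : det2 (v 4 - v 3) (v 1 - v 0) ≠ 0)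
    (h21 : det2 (v 1 - v 2) (v 3 - v 4) ≠ 0)
    (h10 : det2 (v 0 - v 1) (v 3 - v 4) ≠ 0)
    (w u : ℝ × ℝ) (hu : u ≠ 0)
    (hv2 : ∀ r : ℝ, w + r • u ≠ v 2)
    (hpar : ∀ i : Fin 5, i ≠ 2 → det2 u (v i - v 2) ≠ 0)
    (s t s' t' r₀ r₁ r₃ r₄ : ℝ)
    (hs : onLine (v 2) (v 3) (v 0 + s • (v 1 - v 0)))
    (ht : onLine (v 3) (v 4) (v 0 + t • (v 1 - v 0)))
    (hs' : onLine (v 2) (v 1) (v 4 + s' • (v 3 - v 4)))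
    (ht' : onLine (v 1) (v 0) (v 4 + t' • (v 3 - v 4)))
    (hr₀ : onLine (v 2) (v 0) (w + r₀ • u))
    (hr₁ : onLine (v 2) (v 1) (w + r₁ • u))
    (hr₃ : onLine (v 2) (v 3) (w + r₃ • u))
    (hr₄ : onLine (v 2) (v 4) (w + r₄ • u)) :
    invCR r₀ r₁ r₃ r₄ = invCR 0 1 s t * invCR 0 1 s' t' :=
  vertex_invariant_eq_product_of_flags_general v hconv h23 h34 h21 h10 w u hv2 hpar s t s' t' r₀ r₁
    r₃ r₄ hs ht hs' ht' hr₀ hr₁ hr₃ hr₄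
end

section
/- Let (A,B) be a seed of type (n,k). Then the seed map T_{n,k} is well defined on (A,B): in each step of the construction the two relevant lines are distinct and non-parallel, so each point B*_j (j = n,…,n−k+1) is the unique point of ℝ² lying on both lines; and the resulting configuration (A*,B*) is again a seed of type (n,k) (the points A*_1,…,A*_n are in strictly convex position in counterclockwise cyclic order and each B*_j lies in the open segment between A*_j and A*_{j+1}). -/
/-- The (1-indexed) points `A 1, …, A n` are in strictly convex position in this
(counterclockwise) cyclic order: every triple taken in cyclic order is
counterclockwise. -/
def ConvexCyc (n : ℕ) (A : ℕ → ℝ × ℝ) : Prop :=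
  ∀ i j l : ℕ, 1 ≤ i → i < j → j < l → l ≤ n → ccw (A i) (A j) (A l)

/-- A seed of type `(n,k)`: the points `A 1, …, A n` are in strictly convex position
in counterclockwise cyclic order, and for `j = n-k+1, …, n` the point `B j` lies in
the open segment between `A j` and `A (j+1)` (indices mod `n`, so `A (n+1) = A 1`;
note `j % n + 1` equals `j + 1` for `j < n` and equals `1` for `j = n`).
Only the values `A 1, …, A n` and `B (n-k+1), …, B n` are relevant. -/
def IsSeed (n k : ℕ) (A B : ℕ → ℝ × ℝ) : Prop :=
  ConvexCyc n A ∧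
    ∀ j : ℕ, n - k + 1 ≤ j → j ≤ n →
      ∃ t ∈ Set.Ioo (0 : ℝ) 1, B j = A j + t • (A (j % n + 1) - A j)

/-- The intersection point of the line through `a`, `b` with the line through
`c`, `d` (when the two lines are non-parallel). -/
noncomputable def lineInter (a b c d : ℝ × ℝ) : ℝ × ℝ :=
  a + (det2 (c - a) (d - c) / det2 (b - a) (d - c)) • (b - a)

/-- Auxiliary descending recursion producing the points `B*`: `BstAux n A Astar d`
is the point `B*_(n-d)`.  For `d = 0`, `B*_n` is the intersection of the line
through `A 1` and `A*_2` with the line through `A*_n` and `A*_1`; descending,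
`B*_j` (`j = n - d - 1`) is the intersection of the line through `A (j+1)` and
`B*_(j+1)` with the line through `A*_j` and `A*_(j+1)`. -/
noncomputable def BstAux (n : ℕ) (A Astar : ℕ → ℝ × ℝ) : ℕ → ℝ × ℝ
  | 0 => lineInter (A 1) (Astar 2) (Astar n) (Astar 1)
  | d + 1 => lineInter (A (n - d)) (BstAux n A Astar d) (Astar (n - d - 1)) (Astar (n - d))

/-- The seed map `T_{n,k}`, sending the configuration `(A, B)` to `(A*, B*)`:
`A*_i = A_(i+1)` for `i = 1, …, n-k`; `A*_i = B_i` for `i = n-k+1, …, n`; and the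
points `B*_j`, `j = n, n-1, …, n-k+1`, are produced by the descending intersection
recursion `BstAux`. -/
noncomputable def seedMap (n k : ℕ) (S : (ℕ → ℝ × ℝ) × (ℕ → ℝ × ℝ)) :
    (ℕ → ℝ × ℝ) × (ℕ → ℝ × ℝ) :=
  let Astar : ℕ → ℝ × ℝ := fun i => if i ≤ n - k then S.1 (i + 1) else S.2 i
  (Astar, fun j => BstAux n S.1 Astar (n - j))

/-!
Every point of `A*` lies on the boundary of the convex polygon `A`: it is a vertex `A (i+1)` or
a point `B i` inside an edge. The orientation determinant is affine along each edge in each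
argument, so the orientation of three boundary points is a convex combination of orientations
of vertex triples. These are nonnegative for points met in counterclockwise order within one
turn, and one of them is positive unless the three points lie on one closed edge. This gives the
convexity of `A*`. It also shows that in each step of the construction `A*_j` and `A*_(j+1)` lie
strictly on opposite sides of the line through `A (j+1)` and `B*_(j+1)` (through `A 1` and `A*_2`
for `j = n`), so the two lines meet in a single point, in the open segment between `A*_j` and
`A*_(j+1)`, which is what the next step needs.
-/

open Set AffineMap

def orient (a b c : ℝ × ℝ) : ℝ := det2 (b - a) (c - a)

section Orient

variable (a b c X Y : ℝ × ℝ) (s t : ℝ)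

theorem orient_rotate : orient a b c = orient b c a := by
  simp only [orient, det2, Prod.fst_sub, Prod.snd_sub]; ring

theorem orient_swap : orient a b c = -orient a c b := by
  simp only [orient, det2, Prod.fst_sub, Prod.snd_sub]; ring

theorem orient_self_left : orient a a c = 0 := by
  simp only [orient, det2, Prod.fst_sub, Prod.snd_sub]; ring

theorem orient_self_right : orient a b b = 0 := by
  simp only [orient, det2, Prod.fst_sub, Prod.snd_sub]; ring

theorem orient_self_left_right : orient a b a = 0 := by
  simp only [orient, det2, Prod.fst_sub, Prod.snd_sub]; ring

theorem det2_sub_sub_eq_orient_sub : det2 (b - a) (Y - X) = orient a b Y - orient a b X := by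
  simp only [orient, det2, Prod.fst_sub, Prod.snd_sub]; ring

theorem orient_lineMap_left :
    orient (lineMap X Y s) b c = (1 - s) * orient X b c + s * orient Y b c := by
  simp only [orient, det2, lineMap_apply_module, Prod.fst_sub, Prod.snd_sub, Prod.fst_add,
    Prod.snd_add, Prod.smul_fst, Prod.smul_snd, smul_eq_mul]; ring

theorem orient_lineMap_mid :
    orient a (lineMap X Y t) c = (1 - t) * orient a X c + t * orient a Y c := by
  simp only [orient, det2, lineMap_apply_module, Prod.fst_sub, Prod.snd_sub, Prod.fst_add,
    Prod.snd_add, Prod.smul_fst, Prod.smul_snd, smul_eq_mul]; ring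

theorem orient_lineMap_right :
    orient a b (lineMap X Y t) = (1 - t) * orient a b X + t * orient a b Y := by
  simp only [orient, det2, lineMap_apply_module, Prod.fst_sub, Prod.snd_sub, Prod.fst_add,
    Prod.snd_add, Prod.smul_fst, Prod.smul_snd, smul_eq_mul]; ring

theorem orient_lineMap_lineMap :
    orient (lineMap X Y s) (lineMap X Y t) c = (t - s) * orient X Y c := by
  simp only [orient, det2, lineMap_apply_module, Prod.fst_sub, Prod.snd_sub, Prod.fst_add,
    Prod.snd_add, Prod.smul_fst, Prod.smul_snd, smul_eq_mul]; ring

end Orient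

section LineIntersection

variable {a b c d : ℝ × ℝ}

theorem onLine_and_onLine_iff_eq_lineInter (hD : det2 (b - a) (d - c) ≠ 0) (P : ℝ × ℝ) :
    onLine a b P ∧ onLine c d P ↔ P = lineInter a b c d := by
  have hq := div_mul_cancel₀ (det2 (c - a) (d - c)) hD
  simp only [onLine, lineInter, det2, Prod.ext_iff, Prod.fst_sub, Prod.snd_sub, Prod.fst_add,
    Prod.snd_add, Prod.smul_fst, Prod.smul_snd, smul_eq_mul] at hD hq ⊢
  constructor
  · rintro ⟨h1, h2⟩
    constructor
    · rw [← sub_eq_iff_eq_add', div_mul_eq_mul_div, eq_div_iff hD]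
      linear_combination (d.1 - c.1) * h1 - (b.1 - a.1) * h2
    · rw [← sub_eq_iff_eq_add', div_mul_eq_mul_div, eq_div_iff hD]
      linear_combination (d.2 - c.2) * h1 - (b.2 - a.2) * h2
  · rintro ⟨h1, h2⟩
    rw [h1, h2]
    exact ⟨by ring, by linear_combination -hq⟩

theorem det2_ne_zero_of_orient_pos_neg (hc : 0 < orient a b c) (hd : orient a b d < 0) :
    det2 (b - a) (d - c) ≠ 0 := by
  rw [det2_sub_sub_eq_orient_sub]; linarith

theorem lineInter_wellDefined_of_orient_pos_neg (hc : 0 < orient a b c) (hd : orient a b d < 0) :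
    a ≠ b ∧ c ≠ d ∧ det2 (b - a) (d - c) ≠ 0 ∧
      ∀ P, onLine a b P ∧ onLine c d P ↔ P = lineInter a b c d := by
  have hD := det2_ne_zero_of_orient_pos_neg hc hd
  refine ⟨?_, ?_, hD, onLine_and_onLine_iff_eq_lineInter hD⟩
  · rintro rfl
    rw [orient_self_left] at hc
    exact hc.false
  · rintro rfl
    linarith

theorem lineInter_eq_lineMap_of_orient_pos_neg (hc : 0 < orient a b c) (hd : orient a b d < 0) :
    ∃ t ∈ Ioo (0 : ℝ) 1, lineInter a b c d = lineMap c d t := by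
  have hcd : 0 < orient a b c - orient a b d := by linarith
  refine ⟨orient a b c / (orient a b c - orient a b d),
    ⟨div_pos hc hcd, (div_lt_one hcd).2 (by linarith)⟩, ?_⟩
  rw [eq_comm, ← onLine_and_onLine_iff_eq_lineInter (det2_ne_zero_of_orient_pos_neg hc hd)]
  constructor
  · change orient a b _ = 0
    rw [orient_lineMap_right]
    field_simp
    ring
  · change orient c d _ = 0
    rw [orient_lineMap_right, orient_self_left_right, orient_self_right]
    ring

end LineIntersection

section Polygon

variable {n : ℕ} {A : ℕ → ℝ × ℝ}

/-- The vertices `A 1, …, A n` extended `n`-periodically to all indices `q ≥ 1`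
(at `q = 0` it gives `A 1`, not `A n`). -/
def cyc (n : ℕ) (A : ℕ → ℝ × ℝ) (q : ℕ) : ℝ × ℝ := A ((q - 1) % n + 1)

def bdPt (n : ℕ) (A : ℕ → ℝ × ℝ) (e : ℕ) (s : ℝ) : ℝ × ℝ :=
  lineMap (cyc n A e) (cyc n A (e + 1)) s

theorem cyc_of_le {q : ℕ} (hq : 1 ≤ q) (hqn : q ≤ n) : cyc n A q = A q := by
  rw [cyc, Nat.mod_eq_of_lt (by omega)]
  congr 1
  omega

theorem cyc_succ (q : ℕ) : cyc n A (q + 1) = A (q % n + 1) := by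
  rw [cyc, Nat.add_sub_cancel]

theorem cyc_add_mul {q : ℕ} (hq : 1 ≤ q) (m : ℕ) : cyc n A (q + n * m) = cyc n A q := by
  rw [cyc, cyc, show q + n * m - 1 = q - 1 + n * m by omega, Nat.add_mul_mod_self_left]

theorem cyc_add {q : ℕ} (hq : 1 ≤ q) : cyc n A (q + n) = cyc n A q := by
  simpa using cyc_add_mul (A := A) (n := n) hq 1

theorem bdPt_zero (e : ℕ) : bdPt n A e 0 = cyc n A e :=
  lineMap_apply_zero _ _

theorem bdPt_add {e : ℕ} (he : 1 ≤ e) (s : ℝ) : bdPt n A (e + n) s = bdPt n A e s := by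
  rw [bdPt, bdPt, cyc_add he, add_right_comm, cyc_add (by omega)]

theorem orient_cyc_pos_of_le (hA : ConvexCyc n A) {u v w : ℕ} (hu : 1 ≤ u) (hun : u ≤ n)
    (huv : u < v) (hvw : v < w) (hwu : w < u + n) :
    0 < orient (cyc n A u) (cyc n A v) (cyc n A w) := by
  rw [cyc_of_le hu hun]
  by_cases hvn : v ≤ n
  · rw [cyc_of_le (by omega) hvn]
    by_cases hwn : w ≤ n
    · rw [cyc_of_le (by omega) hwn]
      exact hA u v w hu huv hvw hwn
    · obtain ⟨w', rfl⟩ : ∃ w', w = w' + n := ⟨w - n, by omega⟩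
      rw [cyc_add (by omega), cyc_of_le (by omega) (by omega), ← orient_rotate]
      exact hA w' u v (by omega) (by omega) huv hvn
  · obtain ⟨v', rfl⟩ : ∃ v', v = v' + n := ⟨v - n, by omega⟩
    obtain ⟨w', rfl⟩ : ∃ w', w = w' + n := ⟨w - n, by omega⟩
    rw [cyc_add (by omega), cyc_add (by omega), cyc_of_le (by omega) (by omega),
      cyc_of_le (by omega) (by omega), orient_rotate]
    exact hA v' w' u (by omega) (by omega) (by omega) hun

theorem orient_cyc_pos (hA : ConvexCyc n A) {u v w : ℕ} (hu : 1 ≤ u) (huv : u < v) (hvw : v < w)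
    (hwu : w < u + n) : 0 < orient (cyc n A u) (cyc n A v) (cyc n A w) := by
  obtain ⟨u', m, hu', hu'n, rfl⟩ : ∃ u' m, 1 ≤ u' ∧ u' ≤ n ∧ u = u' + n * m :=
    ⟨(u - 1) % n + 1, (u - 1) / n, by omega, Nat.mod_lt _ (by omega),
      by have := Nat.mod_add_div (u - 1) n; omega⟩
  obtain ⟨v', rfl⟩ : ∃ v', v = v' + n * m := ⟨v - n * m, by omega⟩
  obtain ⟨w', rfl⟩ : ∃ w', w = w' + n * m := ⟨w - n * m, by omega⟩
  rw [cyc_add_mul hu', cyc_add_mul (by omega), cyc_add_mul (by omega)]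
  exact orient_cyc_pos_of_le hA hu' hu'n (by omega) (by omega) (by omega)

theorem orient_cyc_nonneg (hA : ConvexCyc n A) {u v w : ℕ} (hu : 1 ≤ u) (huv : u ≤ v)
    (hvw : v ≤ w) (hwu : w ≤ u + n) : 0 ≤ orient (cyc n A u) (cyc n A v) (cyc n A w) := by
  rcases huv.eq_or_lt with rfl | huv
  · rw [orient_self_left]
  rcases hvw.eq_or_lt with rfl | hvw
  · rw [orient_self_right]
  rcases hwu.eq_or_lt with rfl | hwu
  · rw [cyc_add hu, orient_self_left_right]
  exact (orient_cyc_pos hA hu huv hvw hwu).le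

theorem orient_bdPt_right (a b : ℝ × ℝ) (z : ℕ) (u : ℝ) :
    orient a b (bdPt n A z u) =
      (1 - u) * orient a b (cyc n A z) + u * orient a b (cyc n A (z + 1)) :=
  orient_lineMap_right ..

theorem orient_bdPt_bdPt_same (e : ℕ) (s t : ℝ) (c : ℝ × ℝ) :
    orient (bdPt n A e s) (bdPt n A e t) c = (t - s) * orient (cyc n A e) (cyc n A (e + 1)) c :=
  orient_lineMap_lineMap ..

theorem convexComb_pos_left {a b u : ℝ} (ha : 0 < a) (hb : 0 ≤ b) (hu : u ∈ Ico (0 : ℝ) 1) :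
    0 < (1 - u) * a + u * b := by
  nlinarith [hu.1, hu.2]

theorem convexComb_pos_right {a b u : ℝ} (ha : 0 ≤ a) (hb : 0 < b)
    (hu : u ∈ Ioc (0 : ℝ) 1) :
    0 < (1 - u) * a + u * b := by
  nlinarith [hu.1, hu.2]

theorem convexComb_nonneg {a b u : ℝ} (ha : 0 ≤ a) (hb : 0 ≤ b) (hu : u ∈ Icc (0 : ℝ) 1) :
    0 ≤ (1 - u) * a + u * b := by
  nlinarith [hu.1, hu.2]

theorem orient_cyc_cyc_bdPt_pos (hA : ConvexCyc n A) (hn : 3 ≤ n) {x z : ℕ} {u : ℝ}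
    (hx : 1 ≤ x) (hxz : x < z) (hzx : z + 1 ≤ x + n) (hu : u ∈ Ico (0 : ℝ) 1)
    (h : x + 1 < z ∨ 0 < u) : 0 < orient (cyc n A x) (cyc n A (x + 1)) (bdPt n A z u) := by
  rw [orient_bdPt_right]
  by_cases hz : x + 1 < z
  · exact convexComb_pos_left (orient_cyc_pos hA hx (by omega) hz (by omega))
      (orient_cyc_nonneg hA hx (by omega) (by omega) hzx) hu
  · obtain rfl : z = x + 1 := by omega
    exact convexComb_pos_right (orient_cyc_nonneg hA hx (by omega) le_rfl (by omega))
      (orient_cyc_pos hA hx (by omega) (by omega) (by omega)) ⟨h.resolve_left hz, hu.2.le⟩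

theorem orient_bdPt_bdPt_cyc_nonneg (hA : ConvexCyc n A) {x y w : ℕ} {s t : ℝ} (hx : 1 ≤ x)
    (hxy : x < y) (hyw : y < w) (hwx : w ≤ x + n) (hs : s ∈ Icc (0 : ℝ) 1)
    (ht : t ∈ Icc (0 : ℝ) 1) : 0 ≤ orient (bdPt n A x s) (bdPt n A y t) (cyc n A w) := by
  rw [bdPt, bdPt, orient_lineMap_left, orient_lineMap_mid, orient_lineMap_mid]
  exact convexComb_nonneg
    (convexComb_nonneg (orient_cyc_nonneg hA hx hxy.le hyw.le hwx)
      (orient_cyc_nonneg hA hx (by omega) hyw hwx) ht)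
    (convexComb_nonneg (orient_cyc_nonneg hA (by omega) hxy hyw.le (by omega))
      (orient_cyc_nonneg hA (by omega) (by omega) hyw (by omega)) ht) hs

theorem orient_bdPt_bdPt_cyc_pos (hA : ConvexCyc n A) {x y w : ℕ} {s t : ℝ} (hx : 1 ≤ x)
    (hxy : x < y) (hyw : y < w) (hwx : w < x + n) (hs : s ∈ Ico (0 : ℝ) 1)
    (ht : t ∈ Ico (0 : ℝ) 1) : 0 < orient (bdPt n A x s) (bdPt n A y t) (cyc n A w) := by
  rw [bdPt, bdPt, orient_lineMap_left, orient_lineMap_mid, orient_lineMap_mid]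
  exact convexComb_pos_left
    (convexComb_pos_left (orient_cyc_pos hA hx hxy hyw hwx)
      (orient_cyc_nonneg hA hx (by omega) hyw hwx.le) ht)
    (convexComb_nonneg (orient_cyc_nonneg hA (by omega) hxy hyw.le (by omega))
      (orient_cyc_nonneg hA (by omega) (by omega) hyw (by omega)) (Ico_subset_Icc_self ht)) hs

/-- `bdPt n A e s` sits at arc position `e + s` on the boundary. Three boundary points whose
positions increase within one turn, and which do not all lie on one closed edge, are in
counterclockwise position. -/
theorem orient_bdPt_pos (hA : ConvexCyc n A) (hn : 3 ≤ n) {x y z : ℕ} {s t u : ℝ}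
    (hs : s ∈ Ico (0 : ℝ) 1) (ht : t ∈ Ico (0 : ℝ) 1) (hu : u ∈ Ico (0 : ℝ) 1)
    (hx : 1 ≤ (x : ℝ) + s) (hxy : (x : ℝ) + s < y + t) (hyz : (y : ℝ) + t < z + u)
    (hxz : (x : ℝ) + 1 < z + u) (hzx : (z : ℝ) + 1 < x + s + n) :
    0 < orient (bdPt n A x s) (bdPt n A y t) (bdPt n A z u) := by
  have ⟨hs0, hs1⟩ := hs
  have ⟨ht0, ht1⟩ := ht
  have ⟨hu0, hu1⟩ := hu
  have hx' : 1 ≤ x := by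
    have : (0 : ℝ) < x := by linarith
    exact_mod_cast this
  have hxy' : x < y + 1 := by exact_mod_cast (by linarith : (x : ℝ) < y + 1)
  have hyz' : y < z + 1 := by exact_mod_cast (by linarith : (y : ℝ) < z + 1)
  have hxz' : x < z := by exact_mod_cast (by linarith : (x : ℝ) < z)
  have hzx' : z < x + n := by exact_mod_cast (by linarith : (z : ℝ) < x + n)
  rcases (Nat.lt_succ_iff.mp hxy').eq_or_lt with rfl | hxy'
  · rw [orient_bdPt_bdPt_same]
    refine mul_pos (by linarith) (orient_cyc_cyc_bdPt_pos hA hn hx' hxz' (by omega) hu ?_)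
    by_contra! h
    obtain rfl : z = x + 1 := by omega
    push_cast at hxz
    linarith
  rcases (Nat.lt_succ_iff.mp hyz').eq_or_lt with rfl | hyz'
  · rw [orient_rotate, orient_bdPt_bdPt_same, ← bdPt_add hx']
    refine mul_pos (by linarith) (orient_cyc_cyc_bdPt_pos hA hn (by omega) (by omega) (by omega)
      hs ?_)
    by_contra! h
    have : (y : ℝ) + 1 = x + n := by exact_mod_cast (by omega : y + 1 = x + n)
    linarith
  rw [orient_bdPt_right]
  exact convexComb_pos_left (orient_bdPt_bdPt_cyc_pos hA hx' hxy' hyz' hzx' hs ht)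
    (orient_bdPt_bdPt_cyc_nonneg hA hx' hxy' (by omega) (by omega) (Ico_subset_Icc_self hs)
      (Ico_subset_Icc_self ht)) hu

end Polygon

section Seed

variable {n k : ℕ} {A B : ℕ → ℝ × ℝ}

theorem IsSeed.exists_eq_bdPt (hS : IsSeed n k A B) {j : ℕ} (hj : n - k + 1 ≤ j)
    (hjn : j ≤ n) :
    ∃ t ∈ Ioo (0 : ℝ) 1, B j = bdPt n A j t := by
  obtain ⟨t, ht, hB⟩ := hS.2 j hj hjn
  refine ⟨t, ht, ?_⟩
  rw [hB, bdPt, cyc_of_le (by omega) hjn, cyc_succ, lineMap_apply_module', add_comm]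

theorem seedMap_fst_of_le {i : ℕ} (h : i ≤ n - k) : (seedMap n k (A, B)).1 i = A (i + 1) :=
  if_pos h

theorem seedMap_fst_of_lt {i : ℕ} (h : n - k < i) : (seedMap n k (A, B)).1 i = B i :=
  if_neg h.not_ge

theorem seedMap_fst_eq_bdPt (hS : IsSeed n k A B) (hk : 1 ≤ k) {i : ℕ} (hi : 1 ≤ i)
    (hin : i ≤ n) :
    ∃ e : ℕ, ∃ s ∈ Ico (0 : ℝ) 1, (seedMap n k (A, B)).1 i = bdPt n A e s ∧
      (i : ℝ) < e + s ∧ (e : ℝ) + s ≤ i + 1 ∧ (e : ℝ) ≤ n := by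
  rcases le_or_gt i (n - k) with h | h
  · refine ⟨i + 1, 0, ⟨le_rfl, one_pos⟩, ?_, by push_cast; linarith, by push_cast; linarith,
      by exact_mod_cast (by omega : i + 1 ≤ n)⟩
    rw [seedMap_fst_of_le h, bdPt_zero, cyc_of_le (by omega) (by omega)]
  · obtain ⟨t, ht, hB⟩ := hS.exists_eq_bdPt (by omega) hin
    exact ⟨i, t, Ioo_subset_Ico_self ht, (seedMap_fst_of_lt h).trans hB, by linarith [ht.1],
      by linarith [ht.2], by exact_mod_cast hin⟩

theorem seedMap_fst_next_eq_bdPt (hS : IsSeed n k A B) (hn : 2 ≤ n) (hk1 : 1 ≤ k)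
    (hkn : k ≤ n - 1) {i : ℕ} (hi : 1 ≤ i) (hin : i ≤ n) :
    ∃ e : ℕ, ∃ s ∈ Ico (0 : ℝ) 1, (seedMap n k (A, B)).1 (i % n + 1) = bdPt n A e s ∧
      (i : ℝ) + 1 < e + s ∧ (e : ℝ) + s ≤ i + 2 := by
  rcases hin.lt_or_eq with hin | hin
  · obtain ⟨e, s, hs, h, hlo, hhi, -⟩ := seedMap_fst_eq_bdPt hS hk1 (i := i + 1) (by omega) hin
    rw [Nat.mod_eq_of_lt hin]
    push_cast at hlo hhi
    exact ⟨e, s, hs, h, hlo, by linarith⟩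
  · refine ⟨i + 2, 0, ⟨le_rfl, one_pos⟩, ?_, by push_cast; linarith,
      by push_cast; linarith⟩
    rw [hin, Nat.mod_self, zero_add, seedMap_fst_of_le (by omega), bdPt_zero, add_comm n,
      cyc_add (by norm_num), cyc_of_le (by norm_num) hn]

theorem seedMap_fst_convexCyc (hS : IsSeed n k A B) (hn : 4 ≤ n) (hk : 1 ≤ k) :
    ConvexCyc n (seedMap n k (A, B)).1 := by
  intro i j l hi hij hjl hln
  obtain ⟨x, s, hs, hPi, hxlo, hxhi, -⟩ := seedMap_fst_eq_bdPt hS hk hi (by omega)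
  obtain ⟨y, t, ht, hPj, hylo, hyhi, -⟩ :=
    seedMap_fst_eq_bdPt hS hk (i := j) (by omega) (by omega)
  obtain ⟨z, u, hu, hPl, hzlo, hzhi, hzn⟩ := seedMap_fst_eq_bdPt hS hk (i := l) (by omega) hln
  have hi' : (1 : ℝ) ≤ i := by exact_mod_cast hi
  have hij' : (i : ℝ) + 1 ≤ j := by exact_mod_cast hij
  have hjl' : (j : ℝ) + 1 ≤ l := by exact_mod_cast hjl
  change 0 < orient _ _ _
  rw [hPi, hPj, hPl]
  exact orient_bdPt_pos hS.1 (by omega) hs ht hu (by linarith) (by linarith) (by linarith)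
    (by linarith [hs.1]) (by linarith)

theorem orient_seedMap_first (hS : IsSeed n k A B) (hn : 4 ≤ n) (hk1 : 1 ≤ k)
    (hkn : k ≤ n - 1) :
    0 < orient (A 1) ((seedMap n k (A, B)).1 2) ((seedMap n k (A, B)).1 n) ∧
      orient (A 1) ((seedMap n k (A, B)).1 2) ((seedMap n k (A, B)).1 1) < 0 := by
  have hn' : (4 : ℝ) ≤ n := by exact_mod_cast hn
  obtain ⟨e, s, hs, hP2, hlo, hhi, -⟩ :=
    seedMap_fst_eq_bdPt hS hk1 (i := 2) (by norm_num) (by omega)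
  obtain ⟨t, ht, hBn⟩ := hS.exists_eq_bdPt (j := n) (by omega) le_rfl
  have hPn : (seedMap n k (A, B)).1 n = bdPt n A n t := (seedMap_fst_of_lt (by omega)).trans hBn
  have hP1 : (seedMap n k (A, B)).1 1 = bdPt n A 2 0 := by
    rw [seedMap_fst_of_le (by omega), bdPt_zero, cyc_of_le (by norm_num) (by omega)]
  have hA1 : A 1 = bdPt n A 1 0 := by rw [bdPt_zero, cyc_of_le le_rfl (by omega)]
  have hA1' : A 1 = bdPt n A (n + 1) 0 := by rw [hA1, add_comm, bdPt_add le_rfl]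
  push_cast at hlo hhi
  constructor
  · rw [orient_rotate, hP2, hPn, hA1']
    exact orient_bdPt_pos hS.1 (by omega) hs (Ioo_subset_Ico_self ht) ⟨le_rfl, one_pos⟩
      (by linarith) (by linarith [ht.1]) (by push_cast; linarith [ht.2])
      (by push_cast; linarith [hs.1])
      (by push_cast; linarith)
  · rw [orient_swap, neg_lt_zero, hA1, hP1, hP2]
    exact orient_bdPt_pos hS.1 (by omega) ⟨le_rfl, one_pos⟩ ⟨le_rfl, one_pos⟩ hs
      (by norm_num) (by norm_num) (by push_cast; linarith) (by push_cast; linarith)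
      (by push_cast; linarith [hs.1])

theorem orient_seedMap_step (hS : IsSeed n k A B) (hn : 4 ≤ n) (hk1 : 1 ≤ k) (hkn : k ≤ n - 1)
    {j : ℕ} (hj : n - k + 1 ≤ j) (hjn : j < n) {W : ℝ × ℝ} {τ : ℝ}
    (hτ : τ ∈ Ioo (0 : ℝ) 1)
    (hW : W = lineMap ((seedMap n k (A, B)).1 (j + 1))
      ((seedMap n k (A, B)).1 ((j + 1) % n + 1)) τ) :
    0 < orient (A (j + 1)) W ((seedMap n k (A, B)).1 j) ∧
      orient (A (j + 1)) W ((seedMap n k (A, B)).1 (j + 1)) < 0 := by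
  have hn' : (4 : ℝ) ≤ n := by exact_mod_cast hn
  have hj' : (1 : ℝ) ≤ j := by exact_mod_cast (by omega : 1 ≤ j)
  obtain ⟨s₀, hs₀, hB₀⟩ := hS.exists_eq_bdPt (j := j) (by omega) hjn.le
  obtain ⟨s₁, hs₁, hB₁⟩ := hS.exists_eq_bdPt (j := j + 1) (by omega) hjn
  obtain ⟨e, s, hs, hN, hlo, hhi⟩ :=
    seedMap_fst_next_eq_bdPt hS (by omega) hk1 hkn (i := j + 1) (by omega) hjn
  have hP₀ : (seedMap n k (A, B)).1 j = bdPt n A j s₀ :=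
    (seedMap_fst_of_lt (by omega)).trans hB₀
  have hP₁ : (seedMap n k (A, B)).1 (j + 1) = bdPt n A (j + 1) s₁ :=
    (seedMap_fst_of_lt (by omega)).trans hB₁
  have hA : A (j + 1) = bdPt n A (j + 1) 0 := by rw [bdPt_zero, cyc_of_le (by omega) hjn]
  push_cast at hlo hhi
  have h₀A₁ : 0 < orient (bdPt n A j s₀) (bdPt n A (j + 1) 0) (bdPt n A (j + 1) s₁) :=
    orient_bdPt_pos hS.1 (by omega) (Ioo_subset_Ico_self hs₀) ⟨le_rfl, one_pos⟩
      (Ioo_subset_Ico_self hs₁) (by linarith [hs₀.1]) (by push_cast; linarith [hs₀.2])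
      (by push_cast; linarith [hs₁.1]) (by push_cast; linarith [hs₁.1])
      (by push_cast; linarith [hs₀.1])
  have hA₁N : 0 < orient (bdPt n A (j + 1) 0) (bdPt n A (j + 1) s₁) (bdPt n A e s) :=
    orient_bdPt_pos hS.1 (by omega) ⟨le_rfl, one_pos⟩ (Ioo_subset_Ico_self hs₁) hs
      (by push_cast; linarith) (by push_cast; linarith [hs₁.1]) (by push_cast; linarith [hs₁.2])
      (by push_cast; linarith) (by push_cast; linarith [hs.1])
  have h₀AN : 0 < orient (bdPt n A j s₀) (bdPt n A (j + 1) 0) (bdPt n A e s) :=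
    orient_bdPt_pos hS.1 (by omega) (Ioo_subset_Ico_self hs₀) ⟨le_rfl, one_pos⟩ hs
      (by linarith [hs₀.1]) (by push_cast; linarith [hs₀.2]) (by push_cast; linarith)
      (by linarith) (by linarith [hs.1, hs₀.1])
  rw [hW, hP₀, hP₁, hN, hA]
  constructor
  · rw [← orient_rotate, orient_lineMap_right]
    exact convexComb_pos_left h₀A₁ h₀AN.le ⟨hτ.1.le, hτ.2⟩
  · rw [orient_swap, orient_lineMap_right, orient_self_right, neg_lt_zero, mul_zero, zero_add]
    exact mul_pos hτ.1 hA₁N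

theorem seedMap_snd_self : (seedMap n k (A, B)).2 n =
    lineInter (A 1) ((seedMap n k (A, B)).1 2) ((seedMap n k (A, B)).1 n)
      ((seedMap n k (A, B)).1 1) := by
  simp only [seedMap, Nat.sub_self, BstAux]

theorem seedMap_snd_of_lt {j : ℕ} (hj : j < n) : (seedMap n k (A, B)).2 j =
    lineInter (A (j + 1)) ((seedMap n k (A, B)).2 (j + 1)) ((seedMap n k (A, B)).1 j)
      ((seedMap n k (A, B)).1 (j + 1)) := by
  obtain ⟨d, hd⟩ : ∃ d, n - j = d + 1 := ⟨n - j - 1, by omega⟩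
  simp only [seedMap]
  rw [hd, BstAux, show n - d = j + 1 by omega, show n - (j + 1) = d by omega, Nat.add_sub_cancel]

theorem seedMap_snd_eq_lineMap (hS : IsSeed n k A B) (hn : 4 ≤ n) (hk1 : 1 ≤ k)
    (hkn : k ≤ n - 1) {j : ℕ} (hj : n - k + 1 ≤ j) (hjn : j ≤ n) :
    ∃ t ∈ Ioo (0 : ℝ) 1, (seedMap n k (A, B)).2 j =
      lineMap ((seedMap n k (A, B)).1 j) ((seedMap n k (A, B)).1 (j % n + 1)) t := by
  induction hjn using Nat.decreasingInduction with
  | self =>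
    obtain ⟨hc, hd⟩ := orient_seedMap_first hS hn hk1 hkn
    rw [seedMap_snd_self, Nat.mod_self]
    exact lineInter_eq_lineMap_of_orient_pos_neg hc hd
  | of_succ j hjn ih =>
    obtain ⟨τ, hτ, hW⟩ := ih (by omega)
    obtain ⟨hc, hd⟩ := orient_seedMap_step hS hn hk1 hkn hj hjn hτ hW
    rw [seedMap_snd_of_lt hjn, Nat.mod_eq_of_lt hjn]
    exact lineInter_eq_lineMap_of_orient_pos_neg hc hd

end Seed

/-- **The seed map is well defined and carries seeds to seeds.**  For a seed `(A,B)`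
of type `(n,k)`, in each step of the construction of `T_{n,k}(A,B) = (A*,B*)` the two
relevant lines are given by distinct point pairs and are non-parallel, and `B*_j` is
the unique point of `ℝ²` lying on both lines; moreover `(A*,B*)` is again a seed of
type `(n,k)`. -/
theorem seedMap_wellDefined_and_isSeed (n k : ℕ) (hn : 4 ≤ n) (hk1 : 1 ≤ k)
    (hkn : k ≤ n - 1) (A B : ℕ → ℝ × ℝ) (hS : IsSeed n k A B) :
    (let Astar := (seedMap n k (A, B)).1
     let Bstar := (seedMap n k (A, B)).2
     -- the construction of B*_n
     (A 1 ≠ Astar 2 ∧ Astar n ≠ Astar 1 ∧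
       det2 (Astar 2 - A 1) (Astar 1 - Astar n) ≠ 0 ∧
       ∀ P : ℝ × ℝ,
         (onLine (A 1) (Astar 2) P ∧ onLine (Astar n) (Astar 1) P) ↔ P = Bstar n) ∧
     -- the construction of B*_j for j = n-1, …, n-k+1
     (∀ j : ℕ, n - k + 1 ≤ j → j < n →
       A (j + 1) ≠ Bstar (j + 1) ∧ Astar j ≠ Astar (j + 1) ∧
       det2 (Bstar (j + 1) - A (j + 1)) (Astar (j + 1) - Astar j) ≠ 0 ∧
       ∀ P : ℝ × ℝ,
         (onLine (A (j + 1)) (Bstar (j + 1)) P ∧ onLine (Astar j) (Astar (j + 1)) P) ↔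
           P = Bstar j) ∧
     -- the image is again a seed of type (n,k)
     IsSeed n k Astar Bstar) := by
  dsimp only
  refine ⟨?_, fun j hj hjn => ?_, ⟨seedMap_fst_convexCyc hS hn hk1, fun j hj hjn => ?_⟩⟩
  · obtain ⟨hc, hd⟩ := orient_seedMap_first hS hn hk1 hkn
    rw [seedMap_snd_self]
    exact lineInter_wellDefined_of_orient_pos_neg hc hd
  · obtain ⟨τ, hτ, hW⟩ := seedMap_snd_eq_lineMap hS hn hk1 hkn (j := j + 1) (by omega) hjn
    obtain ⟨hc, hd⟩ := orient_seedMap_step hS hn hk1 hkn hj hjn hτ hW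
    rw [seedMap_snd_of_lt hjn]
    exact lineInter_wellDefined_of_orient_pos_neg hc hd
  · obtain ⟨t, ht, h⟩ := seedMap_snd_eq_lineMap hS hn hk1 hkn hj hjn
    exact ⟨t, ht, by rw [h, lineMap_apply_module', add_comm]⟩
end

section
/- Let K ⊂ ℝ² be a compact convex set with nonempty interior, and let (L_m) be a sequence of compact convex subsets of the interior of K, each containing at least two points. If the Euclidean diameter of L_m converges to the Euclidean diameter of K as m → ∞, then the Hilbert diameter of L_m (with respect to K) converges to ∞. -/
/-- The plane `ℝ²` with its Euclidean metric. -/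
abbrev E2 := EuclideanSpace ℝ (Fin 2)

open scoped Classical

/-- The Hilbert distance of two points `b ≠ c` of the interior of a compact convex
set `K`: parametrize the line through `b` and `c` by `t ↦ b + t • (c - b)`, so that
`b` has parameter `0` and `c` has parameter `1`; the chord of `K` corresponds to the
parameter interval `[t₀, t₁]` where `t₀ = sInf T`, `t₁ = sSup T`,
`T = {t | b + t • (c - b) ∈ K}`, and the endpoints of the chord are `a` (parameter
`t₀`) and `d` (parameter `t₁`), ordered `a, b, c, d` along the line.  Then
`d_K(b,c) = log((‖a-c‖‖b-d‖)/(‖a-b‖‖c-d‖)) = log((1-t₀)t₁/((-t₀)(t₁-1)))`, and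
`d_K(b,b) = 0`. -/
noncomputable def hilbertDist (K : Set E2) (b c : E2) : ℝ :=
  if b = c then 0
  else
    Real.log (((1 - sInf {t : ℝ | b + t • (c - b) ∈ K}) * sSup {t : ℝ | b + t • (c - b) ∈ K}) /
      ((-sInf {t : ℝ | b + t • (c - b) ∈ K}) * (sSup {t : ℝ | b + t • (c - b) ∈ K} - 1)))

lemma hilbertDist_key (K : Set E2) (hK : IsCompact K) (b c : E2)
    (hb : b ∈ interior K) (hc : c ∈ interior K) (hbc : b ≠ c)
    (e : ℝ) (he : 0 < e) (hle : Metric.diam K / dist b c - 1 ≤ e) :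
    Real.log (e ^ 2)⁻¹ ≤ hilbertDist K b c := by
  unfold hilbertDist
  rw [if_neg hbc]
  set T := {t : ℝ | b + t • (c - b) ∈ K} with hTdef
  set r := dist b c with hrdef
  have hr : 0 < r := dist_pos.2 hbc
  have hnorm : ‖c - b‖ = r := by rw [hrdef, dist_eq_norm, norm_sub_rev]
  have hdistpt : ∀ t s : ℝ, dist (b + t • (c - b)) (b + s • (c - b)) = |t - s| * r := by
    intro t s
    have h1 : (b + t • (c - b)) - (b + s • (c - b)) = (t - s) • (c - b) := by
      rw [sub_smul]; abel
    rw [dist_eq_norm, h1, norm_smul, Real.norm_eq_abs, hnorm]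
  have hbK : b ∈ K := interior_subset hb
  have hcK : c ∈ K := interior_subset hc
  have h0T : (0:ℝ) ∈ T := by simp [hTdef, hbK]
  have h1T : (1:ℝ) ∈ T := by
    have : b + (1:ℝ) • (c - b) = c := by rw [one_smul]; abel
    simp [hTdef, this, hcK]
  have hTne : T.Nonempty := ⟨0, h0T⟩
  set D := Metric.diam K with hDdef
  have hDdist : ∀ t ∈ T, ∀ s ∈ T, |t - s| * r ≤ D := by
    intro t ht s hs
    rw [← hdistpt]
    exact Metric.dist_le_diam_of_mem hK.isBounded ht hs
  have hbddA : BddAbove T := by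
    refine ⟨D / r, fun t ht => ?_⟩
    have h := hDdist t ht 0 h0T
    simp only [sub_zero] at h
    have : |t| ≤ D / r := (le_div_iff₀ hr).2 h
    exact le_trans (le_abs_self t) this
  have hbddB : BddBelow T := by
    refine ⟨-(D / r), fun t ht => ?_⟩
    have h := hDdist t ht 0 h0T
    simp only [sub_zero] at h
    have : |t| ≤ D / r := (le_div_iff₀ hr).2 h
    linarith [neg_abs_le t]
  set t₀ := sInf T with ht₀def
  set t₁ := sSup T with ht₁def
  have ht₀0 : t₀ ≤ 0 := csInf_le hbddB h0T
  have ht₁1 : 1 ≤ t₁ := le_csSup hbddA h1T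
  -- strict bounds from interior
  obtain ⟨δb, hδb, hballb⟩ := Metric.isOpen_iff.1 isOpen_interior b hb
  obtain ⟨δc, hδc, hballc⟩ := Metric.isOpen_iff.1 isOpen_interior c hc
  have ht₀neg : t₀ < 0 := by
    have hmem : -(δb / (2 * r)) ∈ T := by
      have hd : dist (b + (-(δb / (2 * r))) • (c - b)) b < δb := by
        have := hdistpt (-(δb / (2 * r))) 0
        simp only [zero_smul, add_zero, sub_zero] at this
        rw [this, abs_neg, abs_of_nonneg (by positivity)]
        rw [div_mul_eq_mul_div, mul_comm]
        rw [div_lt_iff₀ (by positivity)]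
        nlinarith
      simpa [hTdef] using interior_subset (hballb hd)
    have := csInf_le hbddB hmem
    have hpos : 0 < δb / (2 * r) := by positivity
    linarith
  have ht₁gt : 1 < t₁ := by
    have hmem : 1 + δc / (2 * r) ∈ T := by
      have hptc : b + (1 + δc / (2 * r)) • (c - b) = c + (δc / (2 * r)) • (c - b) := by
        rw [add_smul, one_smul]; abel
      have hd : dist (b + (1 + δc / (2 * r)) • (c - b)) c < δc := by
        rw [hptc]
        have h1 : (c + (δc / (2 * r)) • (c - b)) - c = (δc / (2 * r)) • (c - b) := by abel
        rw [dist_eq_norm, h1, norm_smul, Real.norm_eq_abs, hnorm,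
          abs_of_nonneg (by positivity), div_mul_eq_mul_div, mul_comm,
          div_lt_iff₀ (by positivity)]
        nlinarith
      simpa [hTdef] using interior_subset (hballc hd)
    have := le_csSup hbddA hmem
    have hpos : 0 < δc / (2 * r) := by positivity
    linarith
  -- chord length bound
  have hsup_inf : t₁ ≤ t₀ + D / r := by
    apply csSup_le hTne
    intro t ht
    have hlow : t - D / r ≤ t₀ := by
      apply le_csInf hTne
      intro s hs
      have h := hDdist t ht s hs
      have h2 : t - s ≤ D / r := le_trans (le_abs_self _) ((le_div_iff₀ hr).2 h)
      linarith
    linarith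
  have hA : -t₀ ≤ e := by
    have : D / r - 1 ≤ e := hle
    linarith
  have hB : t₁ - 1 ≤ e := by
    have : D / r - 1 ≤ e := hle
    linarith
  have h1 : (0:ℝ) < -t₀ := by linarith
  have h2 : (0:ℝ) < t₁ - 1 := by linarith
  have hprod : 0 < (-t₀) * (t₁ - 1) := mul_pos h1 h2
  have hBe2 : (-t₀) * (t₁ - 1) ≤ e ^ 2 := by nlinarith
  have hnum : 1 ≤ (1 - t₀) * t₁ := by nlinarith
  have hfrac : (e ^ 2)⁻¹ ≤ ((1 - t₀) * t₁) / ((-t₀) * (t₁ - 1)) := by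
    rw [← one_div]
    calc 1 / e ^ 2 ≤ 1 / ((-t₀) * (t₁ - 1)) := one_div_le_one_div_of_le hprod hBe2
      _ ≤ ((1 - t₀) * t₁) / ((-t₀) * (t₁ - 1)) := by gcongr
  exact Real.log_le_log (by positivity) hfrac


/-- **Sets almost as wide as `K` have huge Hilbert diameter.**  Let `K ⊆ ℝ²` be
compact convex with nonempty interior, and let `L m` be compact convex subsets of
the interior of `K`, each with at least two points.  If the Euclidean diameter of
`L m` converges to the Euclidean diameter of `K`, then the Hilbert diameter of
`L m` with respect to `K` converges to `∞`: for every bound `C` there is `M` such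
that for all `m ≥ M` some pair of points of `L m` has Hilbert distance exceeding
`C`. -/
theorem hilbertDiam_tendsto_atTop (K : Set E2) (hK : IsCompact K) (hKconv : Convex ℝ K)
    (hKint : (interior K).Nonempty)
    (L : ℕ → Set E2) (hLcpt : ∀ m, IsCompact (L m)) (hLconv : ∀ m, Convex ℝ (L m))
    (hLsub : ∀ m, L m ⊆ interior K) (hLtwo : ∀ m, (L m).Nontrivial)
    (hdiam : Filter.Tendsto (fun m => Metric.diam (L m)) Filter.atTop
      (nhds (Metric.diam K))) :
    ∀ C : ℝ, ∃ M : ℕ, ∀ m : ℕ, M ≤ m → ∃ b ∈ L m, ∃ c ∈ L m, C < hilbertDist K b c := by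
  intro C
  set D := Metric.diam K with hDdef
  -- D > 0
  have hD : 0 < D := by
    obtain ⟨x, hx, y, hy, hne⟩ := hLtwo 0
    have hxK : x ∈ K := interior_subset (hLsub 0 hx)
    have hyK : y ∈ K := interior_subset (hLsub 0 hy)
    have := Metric.dist_le_diam_of_mem hK.isBounded hxK hyK
    have := dist_pos.2 hne
    linarith
  set e := Real.exp (-(C + 1) / 2) with hedef
  have he : 0 < e := Real.exp_pos _
  have h1e : (0:ℝ) < 1 + e := by linarith
  have hθ1 : D / (1 + e) < D := by
    rw [div_lt_iff₀ h1e]; nlinarith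
  set θ := (D / (1 + e) + D) / 2 with hθdef
  have hθlow : D / (1 + e) < θ := by rw [hθdef]; linarith
  have hθD : θ < D := by rw [hθdef]; linarith
  have hθpos : 0 < θ := by
    have : 0 < D / (1 + e) := by positivity
    linarith
  have hev : ∀ᶠ m in Filter.atTop, θ < Metric.diam (L m) :=
    hdiam.eventually (eventually_gt_nhds hθD)
  obtain ⟨M, hM⟩ := Filter.eventually_atTop.1 hev
  refine ⟨M, fun m hm => ?_⟩
  have hdm : θ < Metric.diam (L m) := hM m hm
  have hex : ∃ b ∈ L m, ∃ c ∈ L m, θ < dist b c := by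
    by_contra h
    push_neg at h
    exact absurd (Metric.diam_le_of_forall_dist_le hθpos.le h) (not_le.2 hdm)
  obtain ⟨b, hb, c, hc, hθbc⟩ := hex
  have hdistpos : 0 < dist b c := lt_trans hθpos hθbc
  have hne : b ≠ c := by
    intro h; rw [h, dist_self] at hdistpos; exact lt_irrefl 0 hdistpos
  refine ⟨b, hb, c, hc, ?_⟩
  have hle : D / dist b c - 1 ≤ e := by
    have h1 : D / (1 + e) < dist b c := lt_trans hθlow hθbc
    have h2 : D < dist b c * (1 + e) := (div_lt_iff₀ h1e).1 h1
    have h3 : D / dist b c < 1 + e := (div_lt_iff₀ hdistpos).2 (by linarith)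
    linarith
  have hkey := hilbertDist_key K hK b c (hLsub m hb) (hLsub m hc) hne e he hle
  have hlog : Real.log (e ^ 2)⁻¹ = C + 1 := by
    rw [Real.log_inv, Real.log_pow, hedef, Real.log_exp]
    push_cast
    ring
  linarith
end

section
/- Let (K_m)_{m≥0} be a sequence of nonempty compact convex subsets of ℝ² such that K_{m+1} is contained in the interior of K_m for every m, and suppose there is a constant C such that for every m the Hilbert diameter of K_{m+1} with respect to K_m is at most C. Then the intersection ⋂_{m≥0} K_m consists of exactly one point. -/
open scoped Classical

lemma hilbert_key (K : Set E2) (hK : IsCompact K) (b c : E2)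
    (hb : b ∈ interior K) (hc : c ∈ interior K) (C : ℝ)
    (h : hilbertDist K b c ≤ C) :
    dist b c ≤ (1 / (1 + 2 * Real.exp (-C / 2))) * Metric.diam K := by
  have hw : (0:ℝ) < Real.exp (-C / 2) := Real.exp_pos _
  have hden : (0:ℝ) < 1 + 2 * Real.exp (-C / 2) := by linarith
  rcases eq_or_ne b c with rfl | hbc
  · simp only [dist_self]
    positivity
  have hcb : c - b ≠ 0 := sub_ne_zero.mpr (Ne.symm hbc)
  have hcbn : (0:ℝ) < ‖c - b‖ := norm_pos_iff.mpr hcb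
  set T : Set ℝ := {t : ℝ | b + t • (c - b) ∈ K} with hT
  have hbK : b ∈ K := interior_subset hb
  have hcK : c ∈ K := interior_subset hc
  have h0T : (0:ℝ) ∈ T := by simp [hT, hbK]
  have h1T : (1:ℝ) ∈ T := by simp [hT, hcK]
  have hTne : T.Nonempty := ⟨0, h0T⟩
  have hcont : Continuous fun t : ℝ => b + t • (c - b) := by continuity
  have hTclosed : IsClosed T := hK.isClosed.preimage hcont
  have hbound : Bornology.IsBounded K := hK.isBounded
  have hTsub : T ⊆ Set.Icc (-(Metric.diam K / ‖c - b‖)) (Metric.diam K / ‖c - b‖) := by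
    intro t ht
    have hdist : dist (b + t • (c - b)) b ≤ Metric.diam K :=
      Metric.dist_le_diam_of_mem hbound ht hbK
    have : dist (b + t • (c - b)) b = |t| * ‖c - b‖ := by
      simp [dist_eq_norm, norm_smul, abs_eq_self.mpr (norm_nonneg _)]
    rw [this] at hdist
    have habs : |t| ≤ Metric.diam K / ‖c - b‖ := by
      rw [le_div_iff₀ hcbn]; exact hdist
    exact abs_le.mp habs
  have hbdd : BddBelow T ∧ BddAbove T := by
    constructor
    · exact ⟨_, fun t ht => (hTsub ht).1⟩
    · exact ⟨_, fun t ht => (hTsub ht).2⟩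
  set t₀ := sInf T with ht₀
  set t₁ := sSup T with ht₁
  have ht₀T : t₀ ∈ T := hTclosed.csInf_mem hTne hbdd.1
  have ht₁T : t₁ ∈ T := hTclosed.csSup_mem hTne hbdd.2
  -- t₀ < 0
  have hball_b := Metric.mem_nhds_iff.mp (mem_interior_iff_mem_nhds.mp hb)
  obtain ⟨ε, hε, hεb⟩ := hball_b
  have ht₀neg : t₀ < 0 := by
    have hmem : (-(ε / (2 * ‖c - b‖))) ∈ T := by
      apply hεb
      have : dist (b + (-(ε / (2 * ‖c - b‖))) • (c - b)) b = ε / 2 := by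
        rw [dist_eq_norm]
        simp [norm_smul, abs_of_pos, div_pos hε, abs_div, abs_of_pos hε, abs_of_pos (by positivity : (0:ℝ) < 2*‖c-b‖)]
        field_simp
      rw [Metric.mem_ball, this]; linarith
    have := csInf_le hbdd.1 hmem
    have hpos : (0:ℝ) < ε / (2 * ‖c - b‖) := by positivity
    linarith
  have hball_c := Metric.mem_nhds_iff.mp (mem_interior_iff_mem_nhds.mp hc)
  obtain ⟨δ, hδ, hδc⟩ := hball_c
  have ht₁gt : 1 < t₁ := by
    have hmem : (1 + δ / (2 * ‖c - b‖)) ∈ T := by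
      apply hδc
      have : dist (b + (1 + δ / (2 * ‖c - b‖)) • (c - b)) c = δ / 2 := by
        rw [dist_eq_norm]
        have : b + (1 + δ / (2 * ‖c - b‖)) • (c - b) - c = (δ / (2 * ‖c - b‖)) • (c - b) := by
          module
        rw [this]
        simp [norm_smul, abs_of_pos hδ, abs_of_pos (by positivity : (0:ℝ) < δ / (2*‖c-b‖))]
        field_simp
      rw [Metric.mem_ball, this]; linarith
    have := le_csSup hbdd.2 hmem
    have hpos : (0:ℝ) < δ / (2 * ‖c - b‖) := by positivity
    linarith
  -- cross ratio bound
  rw [hilbertDist, if_neg hbc] at h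
  rw [show {t : ℝ | b + t • (c - b) ∈ K} = T from hT.symm, ← ht₀, ← ht₁] at h
  clear_value t₀ t₁
  clear ht₀ ht₁
  set u := -t₀ with hu
  set v := t₁ - 1 with hv
  clear_value u v
  have hupos : 0 < u := by rw [hu]; linarith
  have hvpos : 0 < v := by rw [hv]; linarith
  have hX : ((1 - t₀) * t₁) / (u * v) ≤ Real.exp C := by
    have hXpos : 0 < ((1 - t₀) * t₁) / (u * v) := by
      apply div_pos
      · nlinarith
      · exact mul_pos hupos hvpos
    calc ((1 - t₀) * t₁) / (u * v)
        = Real.exp (Real.log (((1 - t₀) * t₁) / (u * v))) := (Real.exp_log hXpos).symm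
      _ ≤ Real.exp C := Real.exp_le_exp.mpr h
  have hineq : (1 + u) * (1 + v) ≤ Real.exp C * (u * v) := by
    have hdpos : 0 < u * v := mul_pos hupos hvpos
    have h2 := (div_le_iff₀ hdpos).mp hX
    have e1 : (1 - t₀) * t₁ = (1 + u) * (1 + v) := by rw [hu, hv]; ring
    rw [e1] at h2
    exact h2
  have huv : Real.exp (-C/2) * Real.exp (-C/2) ≤ u * v := by
    have hE : Real.exp C * (Real.exp (-C/2) * Real.exp (-C/2)) = 1 := by
      rw [← Real.exp_add, ← Real.exp_add]; norm_num
    have hEC : 0 < Real.exp C := Real.exp_pos _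
    have h1 : (1:ℝ) ≤ Real.exp C * (u * v) := by nlinarith [mul_pos hupos hvpos]
    nlinarith [h1, hE, hEC]
  have hsum : 2 * Real.exp (-C/2) ≤ u + v := by
    nlinarith [sq_nonneg (u - v), sq_nonneg (u + v - 2 * Real.exp (-C/2))]
  -- chord length
  have hchord : (t₁ - t₀) * ‖c - b‖ ≤ Metric.diam K := by
    have hd : dist (b + t₀ • (c - b)) (b + t₁ • (c - b)) ≤ Metric.diam K :=
      Metric.dist_le_diam_of_mem hbound ht₀T ht₁T
    have : dist (b + t₀ • (c - b)) (b + t₁ • (c - b)) = (t₁ - t₀) * ‖c - b‖ := by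
      rw [dist_eq_norm]
      have e : b + t₀ • (c - b) - (b + t₁ • (c - b)) = (t₀ - t₁) • (c - b) := by module
      rw [e, norm_smul, Real.norm_eq_abs]
      rw [abs_of_neg (by nlinarith : t₀ - t₁ < 0)]
      ring
    linarith [this ▸ hd]
  have ht10 : 1 + 2 * Real.exp (-C/2) ≤ t₁ - t₀ := by
    have e : t₁ - t₀ = 1 + u + v := by rw [hu, hv]; ring
    linarith
  have hdbc : dist b c = ‖c - b‖ := by rw [dist_eq_norm, norm_sub_rev]
  rw [hdbc, div_mul_eq_mul_div, le_div_iff₀ hden, one_mul]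
  calc ‖c - b‖ * (1 + 2 * Real.exp (-C / 2)) ≤ ‖c - b‖ * (t₁ - t₀) := by
        exact mul_le_mul_of_nonneg_left ht10 (le_of_lt hcbn)
    _ ≤ Metric.diam K := by linarith [hchord]

/-- **Nested convex sets at bounded Hilbert diameter shrink to a point.**  Let
`(K m)` be nonempty compact convex subsets of `ℝ²` with `K (m+1)` contained in the
interior of `K m` for every `m`, and suppose there is a constant `C` bounding, for
every `m`, the Hilbert diameter of `K (m+1)` with respect to `K m`.  Then
`⋂ m, K m` consists of exactly one point. -/
theorem nested_bounded_hilbertDiam_inter_singleton (K : ℕ → Set E2)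
    (hne : ∀ m, (K m).Nonempty) (hcpt : ∀ m, IsCompact (K m))
    (hconv : ∀ m, Convex ℝ (K m)) (hnest : ∀ m, K (m + 1) ⊆ interior (K m))
    (C : ℝ) (hC : ∀ m, ∀ b ∈ K (m + 1), ∀ c ∈ K (m + 1), hilbertDist (K m) b c ≤ C) :
    ∃ c : E2, (⋂ m : ℕ, K m) = {c} := by
  set lam : ℝ := 1 / (1 + 2 * Real.exp (-C / 2)) with hlam
  have hw : (0:ℝ) < Real.exp (-C / 2) := Real.exp_pos _
  have hlam0 : 0 < lam := by rw [hlam]; positivity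
  have hlam1 : lam < 1 := by
    rw [hlam, div_lt_one (by linarith)]; linarith
  -- contraction of diameters
  have hstep : ∀ m, Metric.diam (K (m + 1)) ≤ lam * Metric.diam (K m) := by
    intro m
    apply Metric.diam_le_of_forall_dist_le
    · have := Metric.diam_nonneg (s := K m)
      positivity
    · intro x hx y hy
      exact hilbert_key (K m) (hcpt m) x y (hnest m hx) (hnest m hy) C (hC m x hx y hy)
  have hgeom : ∀ m, Metric.diam (K m) ≤ lam ^ m * Metric.diam (K 0) := by
    intro m
    induction m with
    | zero => simp
    | succ n ih =>
      calc Metric.diam (K (n + 1)) ≤ lam * Metric.diam (K n) := hstep n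
        _ ≤ lam * (lam ^ n * Metric.diam (K 0)) :=
            mul_le_mul_of_nonneg_left ih (le_of_lt hlam0)
        _ = lam ^ (n + 1) * Metric.diam (K 0) := by ring
  -- nonempty intersection
  have hsub : ∀ m, K (m + 1) ⊆ K m := fun m => (hnest m).trans interior_subset
  have hSne : (⋂ m, K m).Nonempty :=
    IsCompact.nonempty_iInter_of_sequence_nonempty_isCompact_isClosed K hsub hne
      (hcpt 0) (fun m => (hcpt m).isClosed)
  obtain ⟨c, hc⟩ := hSne
  refine ⟨c, ?_⟩
  have hdiam0 : Metric.diam (⋂ m, K m) ≤ 0 := by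
    have htend : Filter.Tendsto (fun m : ℕ => lam ^ m * Metric.diam (K 0))
        Filter.atTop (nhds 0) := by
      have := (tendsto_pow_atTop_nhds_zero_of_lt_one (le_of_lt hlam0) hlam1).mul_const
        (Metric.diam (K 0))
      simpa using this
    apply ge_of_tendsto' htend
    intro m
    calc Metric.diam (⋂ n, K n) ≤ Metric.diam (K m) :=
          Metric.diam_mono (Set.iInter_subset K m) (hcpt m).isBounded
      _ ≤ lam ^ m * Metric.diam (K 0) := hgeom m
  ext x
  simp only [Set.mem_singleton_iff]
  constructor
  · intro hx
    have hb : Bornology.IsBounded (⋂ m, K m) :=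
      (hcpt 0).isBounded.subset (Set.iInter_subset K 0)
    have hd := Metric.dist_le_diam_of_mem hb hx hc
    have : dist x c ≤ 0 := hd.trans hdiam0
    exact dist_le_zero.mp this
  · rintro rfl; exact hc
end

section
/- Let C > 0 and let p, q be real numbers with 0 < p < q < 1. If log((q(1−p))/(p(1−q))) ≤ C, then q − p ≤ (e^{C/2} − 1)/(e^{C/2} + 1) < 1. (Quantitative contraction: points of the unit interval at bounded Hilbert distance from each other are separated by a Euclidean distance bounded by a uniform factor λ(C) < 1 of the length of the interval; this is the key step showing that bounded Hilbert diameter forces uniform Euclidean contraction of nested convex sets.) -/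
/-- **Quantitative contraction for the Hilbert metric on the unit interval.**
Let `C > 0` and `0 < p < q < 1`.  The Hilbert distance of `p` and `q` in the unit
interval is `log((q(1-p))/(p(1-q)))`; if it is at most `C`, then
`q - p ≤ (e^(C/2) - 1)/(e^(C/2) + 1) < 1`. -/
theorem hilbert_interval_contraction (C p q : ℝ) (hC : 0 < C)
    (hp : 0 < p) (hpq : p < q) (hq : q < 1)
    (h : Real.log ((q * (1 - p)) / (p * (1 - q))) ≤ C) :
    q - p ≤ (Real.exp (C / 2) - 1) / (Real.exp (C / 2) + 1) ∧
      (Real.exp (C / 2) - 1) / (Real.exp (C / 2) + 1) < 1 := by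
  set s := Real.exp (C / 2) with hs
  have hs1 : 1 < s := by
    rw [hs]
    calc (1 : ℝ) = Real.exp 0 := (Real.exp_zero).symm
    _ < Real.exp (C / 2) := Real.exp_lt_exp.2 (by linarith)
  have hq1 : 0 < 1 - q := by linarith
  have hp1 : 0 < 1 - p := by linarith
  have hpos : 0 < p * (1 - q) := mul_pos hp hq1
  have hnum : 0 < q * (1 - p) := mul_pos (by linarith) hp1
  have hratio : (q * (1 - p)) / (p * (1 - q)) ≤ s ^ 2 := by
    have := (Real.log_le_iff_le_exp (div_pos hnum hpos)).1 h
    calc (q * (1 - p)) / (p * (1 - q)) ≤ Real.exp C := this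
    _ = s ^ 2 := by rw [hs, ← Real.exp_nat_mul]; ring_nf
  have hkey : q * (1 - p) ≤ s ^ 2 * (p * (1 - q)) := by
    have := (div_le_iff₀ hpos).1 hratio
    linarith
  set a := Real.sqrt (q * (1 - p)) with ha
  set b := Real.sqrt (p * (1 - q)) with hb
  have ha2 : a ^ 2 = q * (1 - p) := Real.sq_sqrt hnum.le
  have hb2 : b ^ 2 = p * (1 - q) := Real.sq_sqrt hpos.le
  have hbpos : 0 < b := Real.sqrt_pos.2 hpos
  have hba : b ≤ a := Real.sqrt_le_sqrt (by nlinarith)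
  have hsb : a ≤ s * b := by
    have h1 : a ≤ Real.sqrt (s ^ 2 * (p * (1 - q))) := Real.sqrt_le_sqrt hkey
    rwa [Real.sqrt_mul (sq_nonneg s), Real.sqrt_sq (by linarith : (0:ℝ) ≤ s)] at h1
  have hab1 : a + b ≤ 1 := by
    have hprod : a * b = Real.sqrt ((p * q) * ((1 - p) * (1 - q))) := by
      rw [ha, hb, ← Real.sqrt_mul hnum.le]
      ring_nf
    have h2 : a * b ≤ (p * q + (1 - p) * (1 - q)) / 2 := by
      rw [hprod]
      calc Real.sqrt ((p * q) * ((1 - p) * (1 - q)))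
          ≤ Real.sqrt (((p * q + (1 - p) * (1 - q)) / 2) ^ 2) :=
            Real.sqrt_le_sqrt (by nlinarith [sq_nonneg (p * q - (1 - p) * (1 - q))])
        _ = (p * q + (1 - p) * (1 - q)) / 2 :=
            Real.sqrt_sq (by nlinarith [mul_pos hp1 hq1, mul_pos hp (lt_trans hp hpq)])
    nlinarith [sq_nonneg (a + b - 1), sq_nonneg (a + b)]
  constructor
  · rw [le_div_iff₀ (by linarith : (0:ℝ) < s + 1)]
    have hqp : q - p = a ^ 2 - b ^ 2 := by rw [ha2, hb2]; ring
    rw [hqp]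
    nlinarith [mul_nonneg (sub_nonneg.2 hba) (by linarith : (0:ℝ) ≤ 1 - (a + b))]
  · rw [div_lt_one (by linarith)]
    linarith
end

section
/- Let n ≥ 1 and let x : ℤ → ℝ be a 2n-periodic sequence such that 1 − x(2j−1)·x(2j) ≠ 0 for every j ∈ ℤ. Define the 2n-periodic sequence x' : ℤ → ℝ by the pentagram recurrence x'(2j) = x(2j+2)·(1 − x(2j+3)x(2j+4))/(1 − x(2j−1)x(2j)) and x'(2j+1) = x(2j+1)·(1 − x(2j−1)x(2j))/(1 − x(2j+3)x(2j+4)). Then the even and odd products are preserved: ∏_{j=1}^{n} x'(2j) = ∏_{j=1}^{n} x(2j) and ∏_{j=1}^{n} x'(2j+1) = ∏_{j=1}^{n} x(2j+1). (Hence E = ∏ x_{2i} and O = ∏ x_{2i+1} are invariants of the square of the pentagram map on closed n-gons expressed in corner coordinates.) -/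
/-- Cyclic shift by 1 of an `n`-periodic product. -/
lemma periodic_prod_shift1 (n : ℕ) (hn : 1 ≤ n) (f : ℤ → ℝ)
    (hf : ∀ j : ℤ, f (j + n) = f j) :
    ∏ j ∈ Finset.Icc 1 n, f ((j : ℤ) + 1) = ∏ j ∈ Finset.Icc 1 n, f (j : ℤ) := by
  have hmap : ∏ j ∈ Finset.Icc 1 n, f ((j : ℤ) + 1)
      = ∏ j ∈ Finset.Icc 2 (n + 1), f (j : ℤ) := by
    rw [show Finset.Icc 2 (n + 1) = (Finset.Icc 1 n).map (addRightEmbedding 1) by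
      rw [Finset.map_add_right_Icc], Finset.prod_map]
    apply Finset.prod_congr rfl
    intro j _
    simp [addRightEmbedding]
  rw [hmap, Finset.prod_Icc_succ_top (by omega : 2 ≤ n + 1)]
  have hins : Finset.Icc 1 n = insert 1 (Finset.Icc 2 n) := by
    ext k; simp [Finset.mem_Icc, Finset.mem_insert]; omega
  rw [hins, Finset.prod_insert (by simp)]
  have hlast : f ((n + 1 : ℕ) : ℤ) = f ((1 : ℕ) : ℤ) := by
    push_cast
    rw [show ((n : ℤ) + 1) = 1 + (n : ℤ) by ring, hf 1]
  rw [hlast]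
  ring

/-- Cyclic shift by 2 of an `n`-periodic product. -/
lemma periodic_prod_shift2 (n : ℕ) (hn : 1 ≤ n) (f : ℤ → ℝ)
    (hf : ∀ j : ℤ, f (j + n) = f j) :
    ∏ j ∈ Finset.Icc 1 n, f ((j : ℤ) + 2) = ∏ j ∈ Finset.Icc 1 n, f (j : ℤ) := by
  have h1 := periodic_prod_shift1 n hn (fun j => f (j + 1)) (fun j => by
    simpa [add_comm, add_left_comm, add_assoc] using hf (j + 1))
  have h2 := periodic_prod_shift1 n hn f hf
  calc ∏ j ∈ Finset.Icc 1 n, f ((j : ℤ) + 2)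
      = ∏ j ∈ Finset.Icc 1 n, (fun j => f (j + 1)) ((j : ℤ) + 1) := by
        apply Finset.prod_congr rfl; intro j _; ring_nf
    _ = ∏ j ∈ Finset.Icc 1 n, f ((j : ℤ) + 1) := h1
    _ = ∏ j ∈ Finset.Icc 1 n, f (j : ℤ) := h2

/-- **The even and odd products of the corner invariants are preserved by the
pentagram map.**  Let `x : ℤ → ℝ` be a `2n`-periodic sequence of corner invariants
with `1 - x(2j-1)x(2j) ≠ 0` for all `j`, and let `x'` be defined by the pentagram
recurrence.  Then `∏_{j=1}^n x'(2j) = ∏_{j=1}^n x(2j)` and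
`∏_{j=1}^n x'(2j+1) = ∏_{j=1}^n x(2j+1)`. -/
theorem pentagram_even_odd_products (n : ℕ) (hn : 1 ≤ n) (x x' : ℤ → ℝ)
    (hper : ∀ j : ℤ, x (j + 2 * n) = x j)
    (hnz : ∀ j : ℤ, 1 - x (2 * j - 1) * x (2 * j) ≠ 0)
    (heven : ∀ j : ℤ, x' (2 * j) =
      x (2 * j + 2) * (1 - x (2 * j + 3) * x (2 * j + 4)) / (1 - x (2 * j - 1) * x (2 * j)))
    (hodd : ∀ j : ℤ, x' (2 * j + 1) =
      x (2 * j + 1) * (1 - x (2 * j - 1) * x (2 * j)) / (1 - x (2 * j + 3) * x (2 * j + 4))) :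
    (∏ j ∈ Finset.Icc 1 n, x' (2 * (j : ℤ)) = ∏ j ∈ Finset.Icc 1 n, x (2 * (j : ℤ))) ∧
      (∏ j ∈ Finset.Icc 1 n, x' (2 * (j : ℤ) + 1) =
        ∏ j ∈ Finset.Icc 1 n, x (2 * (j : ℤ) + 1)) := by
  set a : ℤ → ℝ := fun j => 1 - x (2 * j - 1) * x (2 * j) with ha
  set e : ℤ → ℝ := fun j => x (2 * j) with he
  set o : ℤ → ℝ := fun j => x (2 * j + 1) with ho
  have haper : ∀ j : ℤ, a (j + n) = a j := by
    intro j
    have h1 : x (2 * (j + n) - 1) = x (2 * j - 1) := by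
      rw [show 2 * (j + (n : ℤ)) - 1 = (2 * j - 1) + 2 * n by ring, hper]
    have h2 : x (2 * (j + n)) = x (2 * j) := by
      rw [show 2 * (j + (n : ℤ)) = 2 * j + 2 * n by ring, hper]
    simp only [ha, h1, h2]
  have heper : ∀ j : ℤ, e (j + n) = e j := by
    intro j
    simp only [he]
    rw [show 2 * (j + (n : ℤ)) = 2 * j + 2 * n by ring, hper]
  have hoper : ∀ j : ℤ, o (j + n) = o j := by
    intro j
    simp only [ho]
    rw [show 2 * (j + (n : ℤ)) + 1 = (2 * j + 1) + 2 * n by ring, hper]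
  have hanz : ∀ j : ℤ, a j ≠ 0 := hnz
  have haprod : (∏ j ∈ Finset.Icc 1 n, a (j : ℤ)) ≠ 0 :=
    Finset.prod_ne_zero_iff.mpr fun j _ => hanz j
  have ha2 : ∀ j : ℤ, a (j + 2) = 1 - x (2 * j + 3) * x (2 * j + 4) := by
    intro j
    simp only [ha]
    rw [show 2 * (j + 2) - 1 = 2 * j + 3 by ring, show 2 * (j + 2) = 2 * j + 4 by ring]
  have hevenkey : ∀ j : ℤ, x' (2 * j) = e (j + 1) * a (j + 2) / a j := by
    intro j
    rw [heven j, ha2]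
    simp only [he, ha]
    ring_nf
  have hoddkey : ∀ j : ℤ, x' (2 * j + 1) = o j * a j / a (j + 2) := by
    intro j
    rw [hodd j, ha2]
  have hashift : ∏ j ∈ Finset.Icc 1 n, a ((j : ℤ) + 2) = ∏ j ∈ Finset.Icc 1 n, a (j : ℤ) :=
    periodic_prod_shift2 n hn a haper
  have heshift : ∏ j ∈ Finset.Icc 1 n, e ((j : ℤ) + 1) = ∏ j ∈ Finset.Icc 1 n, e (j : ℤ) :=
    periodic_prod_shift1 n hn e heper
  constructor
  · calc ∏ j ∈ Finset.Icc 1 n, x' (2 * (j : ℤ))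
        = ∏ j ∈ Finset.Icc 1 n, (e ((j : ℤ) + 1) * a ((j : ℤ) + 2) / a (j : ℤ)) := by
          exact Finset.prod_congr rfl fun j _ => hevenkey j
      _ = (∏ j ∈ Finset.Icc 1 n, e ((j : ℤ) + 1)) * (∏ j ∈ Finset.Icc 1 n, a ((j : ℤ) + 2))
            / (∏ j ∈ Finset.Icc 1 n, a (j : ℤ)) := by
          rw [Finset.prod_div_distrib, Finset.prod_mul_distrib]
      _ = ∏ j ∈ Finset.Icc 1 n, e (j : ℤ) := by
          rw [hashift, heshift, mul_div_assoc, div_self haprod, mul_one]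
      _ = ∏ j ∈ Finset.Icc 1 n, x (2 * (j : ℤ)) := rfl
  · calc ∏ j ∈ Finset.Icc 1 n, x' (2 * (j : ℤ) + 1)
        = ∏ j ∈ Finset.Icc 1 n, (o (j : ℤ) * a (j : ℤ) / a ((j : ℤ) + 2)) := by
          exact Finset.prod_congr rfl fun j _ => hoddkey j
      _ = (∏ j ∈ Finset.Icc 1 n, o (j : ℤ)) * (∏ j ∈ Finset.Icc 1 n, a (j : ℤ))
            / (∏ j ∈ Finset.Icc 1 n, a ((j : ℤ) + 2)) := by
          rw [Finset.prod_div_distrib, Finset.prod_mul_distrib]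
      _ = ∏ j ∈ Finset.Icc 1 n, o (j : ℤ) := by
          rw [hashift, mul_div_assoc, div_self haprod, mul_one]
      _ = ∏ j ∈ Finset.Icc 1 n, x (2 * (j : ℤ) + 1) := rfl
end

section
/- Let z ∈ ℂ with z ≠ −1, and set w = z(z + z̄)/(1 + z̄), where z̄ denotes the complex conjugate. Then, regarding complex numbers as points of the real plane, w is collinear with the points 1 and z², and w is collinear with the points z and z³. (Thus, when the lines are nondegenerate, the intersection of the line through 1 and z² with the line through z and z³ is z(z+z̄)/(1+z̄); this computation underlies the defining equation (z+z̄)^k = z^{n+k}(1+z̄)^k of the logarithmic pentagram spiral with vertices z^n.) -/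
open ComplexConjugate

/-- Three complex numbers `u, v, w`, regarded as points of `ℝ²`, are collinear. -/
def ComplexCollinear (u v w : ℂ) : Prop := ((w - u) * conj (v - u)).im = 0

lemma collinear_of_conj_eq (u v w : ℂ)
    (h : conj ((w - u) * conj (v - u)) = (w - u) * conj (v - u)) :
    ComplexCollinear u v w := by
  unfold ComplexCollinear
  exact (Complex.conj_eq_iff_im.mp h)

/-- **The basic intersection computation for the logarithmic pentagram spiral.**
Let `z ≠ -1` and `w = z(z + z̄)/(1 + z̄)`.  Then `w` is collinear with the points
`1` and `z²`, and `w` is collinear with the points `z` and `z³`. -/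
theorem log_spiral_intersection (z : ℂ) (hz : z ≠ -1) :
    ComplexCollinear 1 (z ^ 2) (z * (z + conj z) / (1 + conj z)) ∧
      ComplexCollinear z (z ^ 3) (z * (z + conj z) / (1 + conj z)) := by
  have h1 : (1 : ℂ) + z ≠ 0 := by
    intro h
    apply hz
    linear_combination h
  have h2 : (1 : ℂ) + conj z ≠ 0 := by
    intro h
    apply h1
    have := congrArg conj h
    simpa using this
  constructor <;> apply collinear_of_conj_eq <;>
    · simp only [map_mul, map_sub, map_div₀, map_add, map_pow, map_one,
        Complex.conj_conj]
    
      field_simp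
      ring
end
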